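/- Let a ∈ ℝ, γ_c = (1,0) ∈ ℝ^{1×2}, 𝓛 : [0,1] → ℝ continuous, and for θ ∈ ℝ let f(·,θ) : [0,1] → ℝ^{1×2} be the unique solution of f″(x,θ) = f(x,θ) S_c(θ) − a f(x,θ) − 𝓛(x)γ_c with f(0,θ) = γ_c, f′(0,θ) = 0. Then for every C₆ > 0 there exists L₁ > 0 such that for all θ₁, θ₂ ∈ [−C₆, C₆]: sup_{x∈[0,1]} ‖f(x,θ₁) − f(x,θ₂)‖ ≤ L₁|θ₁ − θ₂| and ‖f′(1,θ₁) − f′(1,θ₂)‖ ≤ L₁|θ₁ − θ₂|. -/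

import Mathlib

/-!
As a first-order system for `(f, f')` the equation has a right-hand side that is affine in the
state, with linear part of norm at most `K = 1 + C₆ + |a|` whenever `|θ| ≤ C₆`. Grönwall's
inequality therefore bounds all these solutions by one constant `M`. The difference `G` of the
solutions for `θ₁` and `θ₂` vanishes at `0` and satisfies `‖G'‖ ≤ K ‖G‖ + M |θ₁ - θ₂|`, the
`θ`-dependence entering only through `f (S_c θ₁ - S_c θ₂)`; a second application of Grönwall
gives `‖G‖ ≤ M (e^K - 1) / K · |θ₁ - θ₂|` on `[0, 1]`.
-/

open Matrix

/-- The canonical-form matrix `S_c(θ) = [[0, 1], [-θ, 0]]`. -/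
def Sc (θ : ℝ) : Matrix (Fin 2) (Fin 2) ℝ := !![0, 1; -θ, 0]

open Set

lemma vecMul_Sc (v : Fin 2 → ℝ) (θ : ℝ) : vecMul v (Sc θ) = ![-θ * v 1, v 0] := by
  ext j
  fin_cases j <;> simp [Sc, vecMul, dotProduct, Fin.sum_univ_two, mul_comm]

lemma norm_vecMul_Sc_le (v : Fin 2 → ℝ) (θ : ℝ) : ‖vecMul v (Sc θ)‖ ≤ (1 + |θ|) * ‖v‖ := by
  rw [pi_norm_le_iff_of_nonneg (by positivity), vecMul_Sc]
  intro i
  fin_cases i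
  · simpa [abs_mul] using mul_le_mul (le_add_of_nonneg_left zero_le_one) (norm_le_pi_norm v 1)
      (norm_nonneg _) (by positivity)
  · simpa using (norm_le_pi_norm v 0).trans (le_mul_of_one_le_left (norm_nonneg _) (by simp))

lemma norm_vecMul_Sc_sub_vecMul_Sc_le (v : Fin 2 → ℝ) (θ₁ θ₂ : ℝ) :
    ‖vecMul v (Sc θ₁) - vecMul v (Sc θ₂)‖ ≤ |θ₁ - θ₂| * ‖v‖ := by
  rw [pi_norm_le_iff_of_nonneg (by positivity), vecMul_Sc, vecMul_Sc]
  intro i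
  fin_cases i
  · calc ‖(![-θ₁ * v 1, v 0] - ![-θ₂ * v 1, v 0]) 0‖ = |θ₁ - θ₂| * ‖v 1‖ := by
          simp only [Pi.sub_apply, Matrix.cons_val_zero, Real.norm_eq_abs]
          rw [← abs_mul, ← abs_neg]
          ring_nf
      _ ≤ |θ₁ - θ₂| * ‖v‖ := by gcongr; exact norm_le_pi_norm v 1
  · simp; positivity

lemma norm_vecCons_one_zero : ‖(![1, 0] : Fin 2 → ℝ)‖ = 1 := by
  refine le_antisymm ((pi_norm_le_iff_of_nonneg zero_le_one).2 fun i => by fin_cases i <;> simp)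
    ?_
  simpa using norm_le_pi_norm (![1, 0] : Fin 2 → ℝ) 0

def regulatorField (a θ l : ℝ) (v : Fin 2 → ℝ) : Fin 2 → ℝ :=
  vecMul v (Sc θ) - a • v - l • ![1, 0]

lemma norm_regulatorField_le (a θ l : ℝ) (v : Fin 2 → ℝ) :
    ‖regulatorField a θ l v‖ ≤ (1 + |θ| + |a|) * ‖v‖ + |l| := by
  calc ‖regulatorField a θ l v‖ ≤ ‖vecMul v (Sc θ)‖ + ‖a • v‖ + ‖l • (![1, 0] : Fin 2 → ℝ)‖ :=
        (norm_sub_le _ _).trans (add_le_add_left (norm_sub_le _ _) _)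
    _ ≤ (1 + |θ|) * ‖v‖ + |a| * ‖v‖ + |l| := by
        rw [norm_smul, norm_smul, norm_vecCons_one_zero, Real.norm_eq_abs, Real.norm_eq_abs, mul_one]
        gcongr
        exact norm_vecMul_Sc_le v θ
    _ = (1 + |θ| + |a|) * ‖v‖ + |l| := by ring

lemma regulatorField_sub_regulatorField (a θ₁ θ₂ l : ℝ) (u w : Fin 2 → ℝ) :
    regulatorField a θ₁ l u - regulatorField a θ₂ l w =
      regulatorField a θ₁ 0 (u - w) + (vecMul w (Sc θ₁) - vecMul w (Sc θ₂)) := by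
  simp only [regulatorField, sub_vecMul, smul_sub, zero_smul, sub_zero]
  abel

lemma norm_regulatorField_sub_regulatorField_le (a θ₁ θ₂ l : ℝ) (u w : Fin 2 → ℝ) :
    ‖regulatorField a θ₁ l u - regulatorField a θ₂ l w‖ ≤
      (1 + |θ₁| + |a|) * ‖u - w‖ + |θ₁ - θ₂| * ‖w‖ := by
  rw [regulatorField_sub_regulatorField]
  refine (norm_add_le _ _).trans (add_le_add ?_ (norm_vecMul_Sc_sub_vecMul_Sc_le w θ₁ θ₂))
  simpa using norm_regulatorField_le a θ₁ 0 (u - w)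

lemma gronwallBound_δ0_mul (K c ε x : ℝ) :
    gronwallBound 0 K (c * ε) x = c * gronwallBound 0 K ε x := by
  unfold gronwallBound
  split_ifs <;> ring

theorem norm_prod_le_gronwallBound_of_second_order {E : Type*} [NormedAddCommGroup E]
    [NormedSpace ℝ E] {u u' u'' : ℝ → E} {δ K ε a b : ℝ} (hK : 1 ≤ K) (hε : 0 ≤ ε)
    (hu : ∀ x ∈ Icc a b, HasDerivAt u (u' x) x) (hu' : ∀ x ∈ Icc a b, HasDerivAt u' (u'' x) x)
    (ha : ‖(u a, u' a)‖ ≤ δ) (bound : ∀ x ∈ Ico a b, ‖u'' x‖ ≤ K * ‖(u x, u' x)‖ + ε) :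
    ∀ x ∈ Icc a b, ‖(u x, u' x)‖ ≤ gronwallBound δ K ε (x - a) := by
  have hF : ∀ x ∈ Icc a b, HasDerivAt (fun y => (u y, u' y)) (u' x, u'' x) x :=
    fun x hx => (hu x hx).prodMk (hu' x hx)
  refine norm_le_gronwallBound_of_norm_deriv_right_le
    (fun x hx => (hF x hx).continuousAt.continuousWithinAt)
    (fun x hx => (hF x (Ico_subset_Icc_self hx)).hasDerivWithinAt) ha fun x hx => ?_
  refine max_le ?_ (bound x hx)
  calc ‖u' x‖ ≤ ‖(u x, u' x)‖ := le_max_right _ _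
    _ ≤ K * ‖(u x, u' x)‖ + ε := by nlinarith [norm_nonneg (u x, u' x)]

def IsRegulatorSolution (a θ : ℝ) (𝓛 : ℝ → ℝ) (u u' : ℝ → Fin 2 → ℝ) : Prop :=
  u 0 = ![1, 0] ∧ u' 0 = 0 ∧
    ∀ x ∈ Icc (0 : ℝ) 1, HasDerivAt u (u' x) x ∧ HasDerivAt u' (regulatorField a θ (𝓛 x) (u x)) x

namespace IsRegulatorSolution

variable {a θ θ₁ θ₂ K : ℝ} {𝓛 : ℝ → ℝ} {u u' u₁ u₁' u₂ u₂' : ℝ → Fin 2 → ℝ}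

theorem norm_le (h : IsRegulatorSolution a θ 𝓛 u u') (hK : 1 + |θ| + |a| ≤ K) {L : ℝ}
    (hL : ∀ x ∈ Icc (0 : ℝ) 1, |𝓛 x| ≤ L) :
    ∀ x ∈ Icc (0 : ℝ) 1, ‖(u x, u' x)‖ ≤ gronwallBound 1 K L 1 := by
  obtain ⟨h0, h0', hd⟩ := h
  have hL0 : 0 ≤ L := (abs_nonneg _).trans (hL 0 ⟨le_rfl, zero_le_one⟩)
  have hK1 : 1 ≤ K := by linarith [abs_nonneg θ, abs_nonneg a]
  have hinit : ‖(u 0, u' 0)‖ ≤ 1 := by simp [h0, h0', norm_vecCons_one_zero]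
  have hfield : ∀ x ∈ Ico (0 : ℝ) 1,
      ‖regulatorField a θ (𝓛 x) (u x)‖ ≤ K * ‖(u x, u' x)‖ + L := fun x hx =>
    calc ‖regulatorField a θ (𝓛 x) (u x)‖ ≤ (1 + |θ| + |a|) * ‖u x‖ + |𝓛 x| :=
          norm_regulatorField_le _ _ _ _
      _ ≤ K * ‖(u x, u' x)‖ + L := by
          gcongr
          · exact norm_fst_le (u x, u' x)
          · exact hL x (Ico_subset_Icc_self hx)
  intro x hx
  refine (norm_prod_le_gronwallBound_of_second_order hK1 hL0 (fun x hx => (hd x hx).1)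
    (fun x hx => (hd x hx).2) hinit hfield x hx).trans ?_
  rw [sub_zero]
  exact gronwallBound_mono zero_le_one hL0 (by linarith) hx.2

theorem norm_sub_le (h₁ : IsRegulatorSolution a θ₁ 𝓛 u₁ u₁')
    (h₂ : IsRegulatorSolution a θ₂ 𝓛 u₂ u₂') (hK : 1 + |θ₁| + |a| ≤ K) {M : ℝ}
    (hM : ∀ x ∈ Icc (0 : ℝ) 1, ‖u₂ x‖ ≤ M) :
    ∀ x ∈ Icc (0 : ℝ) 1,
      ‖(u₁ x - u₂ x, u₁' x - u₂' x)‖ ≤ |θ₁ - θ₂| * M * gronwallBound 0 K 1 1 := by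
  obtain ⟨h₁0, h₁0', hd₁⟩ := h₁
  obtain ⟨h₂0, h₂0', hd₂⟩ := h₂
  have hM0 : 0 ≤ M := (norm_nonneg _).trans (hM 0 ⟨le_rfl, zero_le_one⟩)
  have hK1 : 1 ≤ K := by linarith [abs_nonneg θ₁, abs_nonneg a]
  have hinit : ‖(u₁ 0 - u₂ 0, u₁' 0 - u₂' 0)‖ ≤ 0 := by simp [h₁0, h₂0, h₁0', h₂0']
  have hfield : ∀ x ∈ Ico (0 : ℝ) 1,
      ‖regulatorField a θ₁ (𝓛 x) (u₁ x) - regulatorField a θ₂ (𝓛 x) (u₂ x)‖ ≤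
        K * ‖(u₁ x - u₂ x, u₁' x - u₂' x)‖ + |θ₁ - θ₂| * M := fun x hx =>
    calc _ ≤ (1 + |θ₁| + |a|) * ‖u₁ x - u₂ x‖ + |θ₁ - θ₂| * ‖u₂ x‖ :=
          norm_regulatorField_sub_regulatorField_le _ _ _ _ _ _
      _ ≤ K * ‖(u₁ x - u₂ x, u₁' x - u₂' x)‖ + |θ₁ - θ₂| * M := by
          gcongr
          · exact norm_fst_le (u₁ x - u₂ x, u₁' x - u₂' x)
          · exact hM x (Ico_subset_Icc_self hx)
  intro x hx
  refine (norm_prod_le_gronwallBound_of_second_order hK1 (by positivity)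
    (fun x hx => (hd₁ x hx).1.sub (hd₂ x hx).1) (fun x hx => (hd₁ x hx).2.sub (hd₂ x hx).2)
    hinit hfield x hx).trans ?_
  calc gronwallBound 0 K (|θ₁ - θ₂| * M) (x - 0)
      ≤ gronwallBound 0 K (|θ₁ - θ₂| * M * 1) 1 := by
        rw [sub_zero, mul_one]
        exact gronwallBound_mono le_rfl (by positivity) (by linarith) hx.2
    _ = |θ₁ - θ₂| * M * gronwallBound 0 K 1 1 := gronwallBound_δ0_mul _ _ _ _

end IsRegulatorSolution

theorem stmt19 (a : ℝ) (𝓛 : ℝ → ℝ) (h𝓛 : ContinuousOn 𝓛 (Set.Icc 0 1))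
    (f f' : ℝ → ℝ → (Fin 2 → ℝ))
    (hsol : ∀ θ : ℝ,
      f 0 θ = ![1, 0] ∧ f' 0 θ = 0 ∧
      ∀ x ∈ Set.Icc (0 : ℝ) 1,
        HasDerivAt (fun y => f y θ) (f' x θ) x ∧
        HasDerivAt (fun y => f' y θ)
          (Matrix.vecMul (f x θ) (Sc θ) - a • f x θ - 𝓛 x • (![1, 0] : Fin 2 → ℝ)) x)
    (C₆ : ℝ) :
    ∃ L₁ > 0, ∀ θ₁ ∈ Set.Icc (-C₆) C₆, ∀ θ₂ ∈ Set.Icc (-C₆) C₆,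
      (∀ x ∈ Set.Icc (0 : ℝ) 1, ‖f x θ₁ - f x θ₂‖ ≤ L₁ * |θ₁ - θ₂|) ∧
      ‖f' 1 θ₁ - f' 1 θ₂‖ ≤ L₁ * |θ₁ - θ₂| := by
  have hsol : ∀ θ, IsRegulatorSolution a θ 𝓛 (f · θ) (f' · θ) := hsol
  obtain ⟨L, hL⟩ := isCompact_Icc.exists_bound_of_continuousOn h𝓛
  set K := 1 + C₆ + |a|
  have hK : ∀ θ ∈ Icc (-C₆) C₆, 1 + |θ| + |a| ≤ K := fun θ hθ => by
    linarith [abs_le.2 ⟨hθ.1, hθ.2⟩]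
  set M := gronwallBound 1 K L 1
  have hM : ∀ θ ∈ Icc (-C₆) C₆, ∀ x ∈ Icc (0 : ℝ) 1, ‖f x θ‖ ≤ M := fun θ hθ x hx =>
    (norm_fst_le _).trans ((hsol θ).norm_le (hK θ hθ) hL x hx)
  refine ⟨max (M * gronwallBound 0 K 1 1) 1, by positivity, fun θ₁ hθ₁ θ₂ hθ₂ => ?_⟩
  have hdiff : ∀ x ∈ Icc (0 : ℝ) 1, ‖(f x θ₁ - f x θ₂, f' x θ₁ - f' x θ₂)‖ ≤
      max (M * gronwallBound 0 K 1 1) 1 * |θ₁ - θ₂| := fun x hx => by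
    refine ((hsol θ₁).norm_sub_le (hsol θ₂) (hK θ₁ hθ₁) (hM θ₂ hθ₂) x hx).trans ?_
    rw [mul_assoc, mul_comm]
    gcongr
    exact le_max_left _ _
  exact ⟨fun x hx => (norm_fst_le _).trans (hdiff x hx),
    (norm_snd_le _).trans (hdiff 1 ⟨zero_le_one, le_rfl⟩)⟩
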